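/- arXiv:2504.13986 — 7 statements merged into one kernel-verified Lean document; each statement's English description precedes it below -/
import Mathlib

section
/- With the inductive definition of ≤_{∅S} for a sequence S of lexicographic revisions from the flat state, for any sequences R and Q of formulas: if I ≤_{∅(R++Q)} J then I ≤_{∅Q} J. -/
/-- Propositional formulas over variables of type `α`. -/
inductive PropForm (α : Type) : Type
  | var : α → PropForm α
  | tru : PropForm α
  | fls : PropForm α
  | neg : PropForm α → PropForm α
  | conj : PropForm α → PropForm α → PropForm α
  | disj : PropForm α → PropForm α → PropForm α

namespace PropForm
/-- Evaluation of a formula in a valuation (model). -/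
def eval {α : Type} (v : α → Bool) : PropForm α → Bool
  | var a => v a
  | tru => true
  | fls => false
  | neg f => !(eval v f)
  | conj f g => eval v f && eval v g
  | disj f g => eval v f || eval v g
end PropForm

/-- A model `I` satisfies formula `A`. -/
def Sat {α : Type} (I : α → Bool) (A : PropForm α) : Prop := PropForm.eval I A = true

/-- The order induced by a single formula: `I ≤_A J` iff `I ⊨ A` or `J ⊭ A`. -/
def leA {α : Type} (A : PropForm α) (I J : α → Bool) : Prop := Sat I A ∨ ¬ Sat J A

/-- Auxiliary: the order generated from the flat state by a revision sequence given
in reverse order (most recent revision first). -/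
def leSeqRev {α : Type} (I J : α → Bool) : List (PropForm α) → Prop
  | [] => True
  | A :: S' => leA A I J ∧ (¬ leA A J I ∨ leSeqRev I J S')

/-- `I ≤_{∅S} J`: the order generated from the flat state by the sequence `S` of
lexicographic revisions (given in chronological order, so the last element of `S`
is the most recent revision).  It satisfies `leSeq [] I J ↔ True` and
`leSeq (S' ++ [A]) I J ↔ leA A I J ∧ (¬ leA A J I ∨ leSeq S' I J)`. -/
def leSeq {α : Type} (S : List (PropForm α)) (I J : α → Bool) : Prop :=
  leSeqRev I J S.reverse

/-- `I ≡_{∅S} J`: equivalence of models in the order generated by `S`. -/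
def equivSeq {α : Type} (S : List (PropForm α)) (I J : α → Bool) : Prop :=
  leSeq S I J ∧ leSeq S J I

theorem leSeqRev_of_append {α : Type} {I J : α → Bool} :
    ∀ {L M : List (PropForm α)}, leSeqRev I J (L ++ M) → leSeqRev I J L
  | [], _, _ => trivial
  | _ :: _, _, ⟨hA, hrest⟩ => ⟨hA, hrest.imp_right leSeqRev_of_append⟩

/-- `I ≤_{∅(R++Q)} J` implies `I ≤_{∅Q} J`. -/
theorem leSeq_append_monotone {α : Type} (R Q : List (PropForm α)) (I J : α → Bool)
    (h : leSeq (R ++ Q) I J) : leSeq Q I J := by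
  -- Most recent revisions come first, so the revisions of `Q` form a prefix of the reversed list.
  rw [leSeq, List.reverse_append] at h
  exact leSeqRev_of_append h
end

section
/- With the inductive definition of ≤_{∅S}, the strict order I <_{∅Q} J (defined as I ≤_{∅Q} J and ¬(J ≤_{∅Q} I)) is preserved under prefixing: if I <_{∅Q} J then I <_{∅(R++Q)} J for any sequence R. -/
theorem leA_of_not_leA {α : Type} {A : PropForm α} {I J : α → Bool} (h : ¬ leA A J I) :
    leA A I J := by
  unfold leA at *
  tauto

theorem leSeqRev_of_not_leSeqRev {α : Type} {I J : α → Bool} :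
    ∀ {L : List (PropForm α)}, ¬ leSeqRev J I L → leSeqRev I J L
  | [], h => absurd trivial h
  | A :: L, h => by
    by_cases hJI : leA A J I
    · have hIJ_and_not : leA A I J ∧ ¬ leSeqRev J I L := by
        simpa only [leSeqRev, hJI, true_and, not_or, not_not] using h
      exact ⟨hIJ_and_not.1, Or.inr (leSeqRev_of_not_leSeqRev hIJ_and_not.2)⟩
    · exact ⟨leA_of_not_leA hJI, Or.inl hJI⟩

/-- Older revisions only break ties left by the newer ones, so they cannot undo a strict
preference. -/
theorem not_leSeqRev_append {α : Type} {I J : α → Bool} (M : List (PropForm α)) :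
    ∀ {L : List (PropForm α)}, ¬ leSeqRev J I L → ¬ leSeqRev J I (L ++ M)
  | [], h => absurd trivial h
  | A :: L, h => fun ⟨hJI, hrest⟩ => by
    have hIJ_and_not : leA A I J ∧ ¬ leSeqRev J I L := by
      simpa only [leSeqRev, hJI, true_and, not_or, not_not] using h
    exact hrest.elim (· hIJ_and_not.1) (not_leSeqRev_append M hIJ_and_not.2)

/-- the strict order `I <_{∅Q} J` is preserved when prefixing revisions. -/
theorem ltSeq_prefix {α : Type} (R Q : List (PropForm α)) (I J : α → Bool)
    (h : leSeq Q I J ∧ ¬ leSeq Q J I) :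
    leSeq (R ++ Q) I J ∧ ¬ leSeq (R ++ Q) J I := by
  have hJI : ¬ leSeq (R ++ Q) J I := by
    rw [leSeq, List.reverse_append]
    exact not_leSeqRev_append R.reverse h.2
  exact ⟨leSeqRev_of_not_leSeqRev hJI, hJI⟩
end

section
/- Define I ≡_{∅S} J as I ≤_{∅S} J and J ≤_{∅S} I. Then for any sequences S and R of formulas, I ≡_{∅(S++R)} J holds if and only if both I ≡_{∅S} J and I ≡_{∅R} J hold. -/
theorem leA_and_leA_iff {α : Type} (A : PropForm α) (I J : α → Bool) :
    leA A I J ∧ leA A J I ↔ (Sat I A ↔ Sat J A) := by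
  unfold leA
  tauto

theorem leSeqRev_and_leSeqRev_iff {α : Type} (I J : α → Bool) (L : List (PropForm α)) :
    leSeqRev I J L ∧ leSeqRev J I L ↔ ∀ A ∈ L, (Sat I A ↔ Sat J A) := by
  induction L with
  | nil => simp [leSeqRev]
  | cons A L ih =>
    rw [List.forall_mem_cons, ← ih, ← leA_and_leA_iff]
    simp only [leSeqRev]
    tauto

theorem equivSeq_iff_forall_sat_iff {α : Type} (S : List (PropForm α)) (I J : α → Bool) :
    equivSeq S I J ↔ ∀ A ∈ S, (Sat I A ↔ Sat J A) := by
  simp only [equivSeq, leSeq, leSeqRev_and_leSeqRev_iff, List.mem_reverse]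

/-- `I ≡_{∅(S++R)} J` iff `I ≡_{∅S} J` and `I ≡_{∅R} J`. -/
theorem equivSeq_append {α : Type} (S R : List (PropForm α)) (I J : α → Bool) :
    equivSeq (S ++ R) I J ↔ (equivSeq S I J ∧ equivSeq R I J) := by
  simp only [equivSeq_iff_forall_sat_iff, List.forall_mem_append]
end

section
/- The orders ∅(S++R) and ∅R generated by lexicographic revision sequences differ if and only if there exist models I and J with I ≡_{∅R} J (i.e., I ≤_{∅R} J and J ≤_{∅R} I) and ¬(I ≤_{∅S} J). -/
lemma leSeqRev_append {α : Type} (I J : α → Bool) (L₁ L₂ : List (PropForm α)) :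
    leSeqRev I J (L₁ ++ L₂) ↔ leSeqRev I J L₁ ∧ (leSeqRev J I L₁ → leSeqRev I J L₂) := by
  induction L₁ with
  | nil => simp [leSeqRev]
  | cons A L₁ ih =>
    simp only [List.cons_append, leSeqRev, ih]
    tauto

lemma leSeq_append {α : Type} (S R : List (PropForm α)) (I J : α → Bool) :
    leSeq (S ++ R) I J ↔ leSeq R I J ∧ (leSeq R J I → leSeq S I J) := by
  simp only [leSeq, List.reverse_append, leSeqRev_append]

lemma leSeq_append_eq_leSeq_iff {α : Type} (S R : List (PropForm α)) :
    (∀ I J : α → Bool, leSeq (S ++ R) I J ↔ leSeq R I J) ↔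
      ∀ I J : α → Bool, leSeq R I J → leSeq R J I → leSeq S I J := by
  simp only [leSeq_append, and_iff_left_iff_imp]

/-- STATEMENT 6: the orders `∅(S++R)` and `∅R` differ iff there exist models
`I ≡_{∅R} J` with `¬(I ≤_{∅S} J)`. -/
theorem orders_differ_iff {α : Type} (S R : List (PropForm α)) :
    (¬ ∀ I J : α → Bool, leSeq (S ++ R) I J ↔ leSeq R I J) ↔
      (∃ I J : α → Bool, leSeq R I J ∧ leSeq R J I ∧ ¬ leSeq S I J) := by
  rw [leSeq_append_eq_leSeq_iff]
  push Not
  rfl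
end

section
/- The order ∅[S_1,S_2,…,S_m] coincides with ∅[S_2,…,S_m] (i.e., the revision S_1 is redundant from the flat state) if and only if for every Q-combination Q of S_2,…,S_m, either Q entails S_1 or Q entails ¬S_1. -/
/-- The Q-combination of formulas `S` determined by the Boolean vector `B`:
the conjunction over `i` of `S i` if `B i = true` and of `¬ S i` if `B i = false`. -/
def qcomb {α : Type} : List Bool → List (PropForm α) → PropForm α
  | b :: bs, s :: ss => PropForm.conj (if b then s else PropForm.neg s) (qcomb bs ss)
  | _, _ => PropForm.tru

/-!
Unfolding the recursion from the most recent revision, `∅(S₁ :: S)` compares two models by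
`∅S` first and consults the oldest revision `S₁` only to break ties. Two models are tied in
`∅S` exactly when they give the same truth value to every formula of `S`, i.e. when they
satisfy the same Q-combination of `S`. Hence `S₁` is redundant iff its truth value is
constant on the models of each Q-combination.
-/

namespace PropForm

variable {α : Type}

lemma leSeqRev_append (I J : α → Bool) (A : PropForm α) :
    ∀ L : List (PropForm α),
      leSeqRev I J (L ++ [A]) ↔ leSeqRev I J L ∧ (¬ leSeqRev J I L ∨ leA A I J)
  | [] => by simp [leSeqRev]
  | B :: L => by
    simp only [List.cons_append, leSeqRev, leSeqRev_append I J A L]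
    tauto

lemma leSeq_cons (I J : α → Bool) (A : PropForm α) (S : List (PropForm α)) :
    leSeq (A :: S) I J ↔ leSeq S I J ∧ (¬ leSeq S J I ∨ leA A I J) := by
  simpa only [leSeq, List.reverse_cons] using leSeqRev_append I J A S.reverse

lemma leSeqRev_and_leSeqRev_iff (I J : α → Bool) :
    ∀ L : List (PropForm α),
      (leSeqRev I J L ∧ leSeqRev J I L) ↔ ∀ A ∈ L, eval I A = eval J A
  | [] => by simp [leSeqRev]
  | B :: L => by
    simp only [leSeqRev, List.mem_cons, forall_eq_or_imp, ← leSeqRev_and_leSeqRev_iff I J L,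
      leA, Sat]
    cases eval I B <;> cases eval J B <;> simp

lemma equivSeq_iff_map_eval_eq (S : List (PropForm α)) (I J : α → Bool) :
    equivSeq S I J ↔ S.map (eval I) = S.map (eval J) := by
  rw [List.map_inj_left, equivSeq, leSeq, leSeq, leSeqRev_and_leSeqRev_iff]
  simp only [List.mem_reverse]

lemma sat_qcomb_iff (I : α → Bool) :
    ∀ {B : List Bool} {S : List (PropForm α)}, B.length = S.length →
      (Sat I (qcomb B S) ↔ S.map (eval I) = B)
  | [], [], _ => by simp [qcomb, Sat, eval]
  | b :: B, A :: S, h => by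
    have ih := sat_qcomb_iff I (B := B) (S := S) (by simpa using h)
    simp only [Sat] at ih
    cases b <;> simp [qcomb, Sat, eval, ih]

lemma forall_leSeq_cons_iff (A : PropForm α) (S : List (PropForm α)) :
    (∀ I J : α → Bool, leSeq (A :: S) I J ↔ leSeq S I J) ↔
      ∀ I J : α → Bool, equivSeq S I J → Sat J A → Sat I A := by
  simp only [leSeq_cons, equivSeq, leA]
  refine forall₂_congr fun I J => ?_
  tauto

lemma qcomb_entails_or_refutes_iff (A : PropForm α) (S : List (PropForm α)) :
    (∀ B : List Bool, B.length = S.length →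
        (∀ I : α → Bool, Sat I (qcomb B S) → Sat I A) ∨
        (∀ I : α → Bool, Sat I (qcomb B S) → ¬ Sat I A)) ↔
      ∀ I J : α → Bool, S.map (eval I) = S.map (eval J) → Sat J A → Sat I A := by
  constructor
  · intro h I J hIJ hJ
    have hlen : (S.map (eval I)).length = S.length := List.length_map _
    have hI : Sat I (qcomb (S.map (eval I)) S) := (sat_qcomb_iff I hlen).2 rfl
    have hJQ : Sat J (qcomb (S.map (eval I)) S) := (sat_qcomb_iff J hlen).2 hIJ.symm
    exact (h _ hlen).elim (· I hI) fun hneg => absurd hJ (hneg J hJQ)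
  · intro h B hB
    by_cases hwit : ∃ J, Sat J (qcomb B S) ∧ Sat J A
    · obtain ⟨J, hJQ, hJ⟩ := hwit
      refine Or.inl fun I hIQ => h I J ?_ hJ
      rw [(sat_qcomb_iff I hB).1 hIQ, (sat_qcomb_iff J hB).1 hJQ]
    · exact Or.inr fun I hIQ hI => hwit ⟨I, hIQ, hI⟩

end PropForm

/-- STATEMENT 10: `∅(S₁ :: S)` coincides with `∅S` iff every Q-combination of `S`
entails `S₁` or entails `¬S₁`. -/
theorem redundant_iff_qcomb_entails {α : Type} (S1 : PropForm α) (S : List (PropForm α)) :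
    (∀ I J : α → Bool, leSeq (S1 :: S) I J ↔ leSeq S I J) ↔
      (∀ B : List Bool, B.length = S.length →
        (∀ I : α → Bool, Sat I (qcomb B S) → Sat I S1) ∨
        (∀ I : α → Bool, Sat I (qcomb B S) → ¬ Sat I S1)) := by
  rw [PropForm.forall_leSeq_cons_iff, PropForm.qcomb_entails_or_refutes_iff]
  simp only [PropForm.equivSeq_iff_map_eval_eq]
end

section
/- If S_i is one of the formulas occurring in the sequence S, then both ∅([S_i] ++ S) and ∅([¬S_i] ++ S) coincide with ∅S. -/
/-!
A formula prepended to `S` is the oldest revision, so it is consulted only to break ties between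
models that are equivalent in `∅S`. Such models agree on every formula of `S`, hence on `Sᵢ` and on
`¬Sᵢ`, and neither formula can break the tie.
-/

section

variable {α : Type} {I J : α → Bool}

theorem sat_neg (A : PropForm α) : Sat I (.neg A) ↔ ¬ Sat I A := by
  simp [Sat, PropForm.eval]

theorem leA_of_sat_iff {A : PropForm α} (h : Sat I A ↔ Sat J A) : leA A I J := by
  rw [leA, h]
  exact em _

theorem leSeqRev_append_singleton (I J : α → Bool) (B : PropForm α) :
    ∀ L : List (PropForm α),
      leSeqRev I J (L ++ [B]) ↔ leSeqRev I J L ∧ (¬ leSeqRev J I L ∨ leA B I J)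
  | [] => by simp [leSeqRev]
  | A :: L => by
    simp only [List.cons_append, leSeqRev, leSeqRev_append_singleton I J B L]
    tauto

theorem leSeq_cons (B : PropForm α) (S : List (PropForm α)) :
    leSeq (B :: S) I J ↔ leSeq S I J ∧ (¬ leSeq S J I ∨ leA B I J) := by
  simp only [leSeq, List.reverse_cons, leSeqRev_append_singleton]

theorem sat_iff_of_leSeqRev_of_leSeqRev :
    ∀ {L : List (PropForm α)}, leSeqRev I J L → leSeqRev J I L →
      ∀ A ∈ L, (Sat I A ↔ Sat J A)
  | [], _, _, _, hA => absurd hA List.not_mem_nil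
  | B :: _, ⟨hIJ, hIJ'⟩, ⟨hJI, hJI'⟩, A, hA => by
    rcases List.mem_cons.mp hA with rfl | hA
    · unfold leA at hIJ hJI
      tauto
    · exact sat_iff_of_leSeqRev_of_leSeqRev (hIJ'.resolve_left (not_not.2 hJI))
        (hJI'.resolve_left (not_not.2 hIJ)) A hA

theorem equivSeq.sat_iff {S : List (PropForm α)} {A : PropForm α} (h : equivSeq S I J)
    (hA : A ∈ S) : Sat I A ↔ Sat J A :=
  sat_iff_of_leSeqRev_of_leSeqRev h.1 h.2 A (List.mem_reverse.2 hA)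

theorem leSeq_cons_iff_of_leA {S : List (PropForm α)} {B : PropForm α}
    (hB : ∀ I J, equivSeq S I J → leA B I J) : leSeq (B :: S) I J ↔ leSeq S I J := by
  rw [leSeq_cons]
  refine ⟨And.left, fun hIJ => ⟨hIJ, or_iff_not_imp_left.2 fun hJI => hB I J ⟨hIJ, ?_⟩⟩⟩
  exact not_not.1 hJI

end

/-- prepending a formula of the sequence, or its negation,
does not change the order. -/
theorem prepend_member_redundant {α : Type} (S : List (PropForm α)) (Si : PropForm α)
    (h : Si ∈ S) :
    (∀ I J : α → Bool, leSeq (Si :: S) I J ↔ leSeq S I J) ∧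
    (∀ I J : α → Bool, leSeq (PropForm.neg Si :: S) I J ↔ leSeq S I J) := by
  refine ⟨fun _ _ => leSeq_cons_iff_of_leA fun I J hIJ => ?_,
    fun _ _ => leSeq_cons_iff_of_leA fun I J hIJ => ?_⟩
  · exact leA_of_sat_iff (hIJ.sat_iff h)
  · exact leA_of_sat_iff (by rw [sat_neg, sat_neg, hIJ.sat_iff h])
end

section
/- There exist sequences S and R of formulas and a formula F such that ∅(R ++ [F] ++ S) coincides with ∅(R ++ S) but ∅([F] ++ S) does not coincide with ∅S. Concretely, S = [a], F = ¬a ∨ b, R = [a ∧ b] over two propositional variables a, b is such a counterexample. -/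
/-- The variable `a` (over the two-variable alphabet `Bool`). -/
def fa : PropForm Bool := PropForm.var true
/-- The variable `b`. -/
def fb : PropForm Bool := PropForm.var false

/-! The most recent revision by `a` decides every comparison between models that differ on `a`.
Among models of `a`, both `¬a ∨ b` and `a ∧ b` reduce to `b`, so revising by `¬a ∨ b` right after
`a ∧ b` changes nothing; among models of `¬a`, `¬a ∨ b` holds everywhere. Without the earlier
`a ∧ b`, however, `¬a ∨ b` makes the models of `a ∧ b` strictly more plausible than those of
`a ∧ ¬b`, which `∅[a]` ranks equally. -/

section LexicographicRevision

variable {α : Type} {I J : α → Bool} {A B : PropForm α} {S : List (PropForm α)}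

theorem leSeqRev_cons_of_sat_iff (h : Sat I A ↔ Sat J A) :
    leSeqRev I J (A :: S) ↔ leSeqRev I J S := by
  simp only [leSeqRev, leA]
  tauto

theorem leSeqRev_cons_of_not_sat_iff (h : ¬(Sat I A ↔ Sat J A)) :
    leSeqRev I J (A :: S) ↔ leA A I J := by
  simp only [leSeqRev, leA]
  tauto

theorem leSeqRev_cons_cons_iff_cons (hI : Sat I B ↔ Sat I A) (hJ : Sat J B ↔ Sat J A) :
    leSeqRev I J (B :: A :: S) ↔ leSeqRev I J (A :: S) := by
  by_cases hB : Sat I B ↔ Sat J B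
  · exact leSeqRev_cons_of_sat_iff hB
  · have hA : ¬(Sat I A ↔ Sat J A) := by rwa [← hI, ← hJ]
    rw [leSeqRev_cons_of_not_sat_iff hB, leSeqRev_cons_of_not_sat_iff hA, leA, leA, hI, hJ]

end LexicographicRevision

open PropForm

theorem leSeq_conj_disj_var_iff_leSeq_conj_var (I J : Bool → Bool) :
    leSeq [conj fa fb, disj (neg fa) fb, fa] I J ↔ leSeq [conj fa fb, fa] I J := by
  change leSeqRev I J [fa, disj (neg fa) fb, conj fa fb] ↔ leSeqRev I J [fa, conj fa fb]
  by_cases ha : Sat I fa ↔ Sat J fa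
  · rw [leSeqRev_cons_of_sat_iff ha, leSeqRev_cons_of_sat_iff ha]
    by_cases hIa : Sat I fa
    · apply leSeqRev_cons_cons_iff_cons <;> simp_all [Sat, eval, fa]
    · apply leSeqRev_cons_of_sat_iff
      simp_all [Sat, eval, fa]
  · rw [leSeqRev_cons_of_not_sat_iff ha, leSeqRev_cons_of_not_sat_iff ha]

theorem not_forall_leSeq_disj_var_iff_leSeq_var :
    ¬ ∀ I J : Bool → Bool, leSeq [disj (neg fa) fb, fa] I J ↔ leSeq [fa] I J := by
  intro h
  have := (h id fun _ => true).mpr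
  simp [leSeq, leSeqRev, leA, Sat, eval, fa, fb] at this

/-- STATEMENT 17: there exist `S`, `R`, `F` such that `∅(R++[F]++S)` coincides with
`∅(R++S)` but `∅([F]++S)` does not coincide with `∅S`; concretely `S = [a]`,
`F = ¬a ∨ b`, `R = [a ∧ b]`. -/
theorem redundancy_not_cut :
    ∃ (S R : List (PropForm Bool)) (F : PropForm Bool),
      S = [fa] ∧ F = PropForm.disj (PropForm.neg fa) fb ∧ R = [PropForm.conj fa fb] ∧
      (∀ I J : Bool → Bool, leSeq (R ++ [F] ++ S) I J ↔ leSeq (R ++ S) I J) ∧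
      ¬ (∀ I J : Bool → Bool, leSeq ([F] ++ S) I J ↔ leSeq S I J) := by
  refine ⟨_, _, _, rfl, rfl, rfl, leSeq_conj_disj_var_iff_leSeq_conj_var,
    not_forall_leSeq_disj_var_iff_leSeq_var⟩
end
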